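/- For every θ ∈ [0, T₀] and every s ∈ [0, T], ⟨η(T, s, x₀(θ)) − η(0, s, x₀(θ)), N(θ)⟩ = ⟨ẋ₀(θ), y(θ)^⊤⟩ · ∫_{s−T+θ}^{s+θ} ⟨ d(τ, 0) D(τ) φ(τ−θ, x₀(τ)), f(θ) ⟩ dτ, where D(τ) is the 2×2 matrix whose first row is y(τ)^⊤ and whose second row is ẋ₀(τ)^⊥. (identity established in the proof of Theorem 3) -/

import Mathlib

open scoped RealInnerProductSpace

/-- For `a = (a₁, a₂) ∈ ℝ²`, `a^⊥ = (−a₂, a₁)`. -/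
noncomputable def perpVec (a : EuclideanSpace ℝ (Fin 2)) : EuclideanSpace ℝ (Fin 2) :=
  WithLp.toLp 2 ![-(a 1), a 0]

/-- For `a = (a₁, a₂) ∈ ℝ²`, `a^⊤ = (a₂, −a₁)`. -/
noncomputable def topVec (a : EuclideanSpace ℝ (Fin 2)) : EuclideanSpace ℝ (Fin 2) :=
  WithLp.toLp 2 ![a 1, -(a 0)]

/-- The 2×2 real matrix with rows `a` and `b`. -/
noncomputable def rowsMatrix (a b : EuclideanSpace ℝ (Fin 2)) :
    Matrix (Fin 2) (Fin 2) ℝ := !![a 0, a 1; b 0, b 1]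

/-- The 2×2 real matrix with columns `a` and `b`. -/
noncomputable def columnsMatrix (a b : EuclideanSpace ℝ (Fin 2)) :
    Matrix (Fin 2) (Fin 2) ℝ := !![a 0, b 0; a 1, b 1]

/-- A 2×2 real matrix acting on `ℝ²` (Euclidean). -/
noncomputable def mulVecE (M : Matrix (Fin 2) (Fin 2) ℝ)
    (v : EuclideanSpace ℝ (Fin 2)) : EuclideanSpace ℝ (Fin 2) := WithLp.toLp 2 (M.mulVec v)

/-! Along the orbit `t ↦ x₀ (t + θ)` the variational equation has the fundamental solutions
`t ↦ ψ (x₀ (t + θ))` and `t ↦ y (t + θ)`, and `t ↦ η t s (x₀ θ)` solves the inhomogeneous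
equation with forcing `t ↦ φ t (x₀ (t + θ))`; coefficients and forcing are `T`-periodic since `T`
is a common multiple of `T₀` and `T₁`. The integrand of the statement is the forcing written in
the moving frame by Cramer's rule, and the left side is the jump of the solution over one period
in the frame at `x₀ θ`, so the identity is variation of constants over one period. -/

local notation "E2" => EuclideanSpace ℝ (Fin 2)

def cross (a b : E2) : ℝ := a 0 * b 1 - a 1 * b 0

/-- The pairing of `c` with the coordinates of `p` in the basis `(u, v)`, computed by Cramer's
rule; it is `0` when `u, v` are dependent. -/
noncomputable def coordPairing (u v c p : E2) : ℝ := (cross p v * c 0 + cross u p * c 1) / cross u v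

theorem det_rowsMatrix (a b : E2) : (rowsMatrix a b).det = cross a b := by
  simp [rowsMatrix, cross, Matrix.det_fin_two_of]

theorem cross_ne_zero_of_linearIndependent {a b : E2} (h : LinearIndependent ℝ ![a, b]) :
    cross a b ≠ 0 := by
  have hrows : LinearIndependent ℝ (rowsMatrix a b).row := by
    have hrow : (rowsMatrix a b).row = WithLp.linearEquiv 2 ℝ (Fin 2 → ℝ) ∘ ![a, b] := by
      ext i j; fin_cases i <;> fin_cases j <;> rfl
    rw [hrow]
    exact h.map' _ (LinearEquiv.ker _)
  rw [← det_rowsMatrix]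
  exact ((Matrix.isUnit_iff_isUnit_det _).mp
    (Matrix.linearIndependent_rows_iff_isUnit.mp hrows)).ne_zero

theorem cross_add_left (a b c : E2) : cross (a + b) c = cross a c + cross b c := by
  simp only [cross, PiLp.add_apply]; ring

theorem cross_add_right (a b c : E2) : cross a (b + c) = cross a b + cross a c := by
  simp only [cross, PiLp.add_apply]; ring

/-- Liouville's formula in infinitesimal form. -/
theorem cross_map_add_cross_map (A : E2 →L[ℝ] E2) (a b : E2) :
    cross (A a) b + cross a (A b) = LinearMap.trace ℝ E2 A * cross a b := by
  rw [LinearMap.trace_eq_matrix_trace ℝ (EuclideanSpace.basisFun (Fin 2) ℝ).toBasis,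
    Matrix.trace_fin_two]
  have hA : ∀ v : E2,
      A v = v 0 • A (EuclideanSpace.single 0 1) + v 1 • A (EuclideanSpace.single 1 1) := by
    intro v
    rw [← map_smul, ← map_smul, ← map_add]
    congr 1; ext i; fin_cases i <;> simp
  rw [hA a, hA b]
  simp only [cross, PiLp.add_apply, PiLp.smul_apply, smul_eq_mul, LinearMap.toMatrix_apply,
    OrthonormalBasis.coe_toBasis, EuclideanSpace.basisFun_apply, ContinuousLinearMap.coe_coe,
    OrthonormalBasis.coe_toBasis_repr_apply, EuclideanSpace.basisFun_repr]
  ring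

theorem HasDerivAt.cross {u v : ℝ → E2} {u' v' : E2} {t : ℝ}
    (hu : HasDerivAt u u' t) (hv : HasDerivAt v v' t) :
    HasDerivAt (fun τ => cross (u τ) (v τ)) (cross u' (v t) + cross (u t) v') t := by
  have hcoord : ∀ {w : ℝ → E2} {w' : E2} (i : Fin 2), HasDerivAt w w' t →
      HasDerivAt (fun τ => w τ i) (w' i) t :=
    fun i hw => ((EuclideanSpace.proj i).hasFDerivAt.comp_hasDerivAt t hw :)
  refine (((hcoord 0 hu).mul (hcoord 1 hv)).sub ((hcoord 1 hu).mul (hcoord 0 hv))).congr_deriv ?_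
  simp only [_root_.cross]; ring

theorem Continuous.cross {X : Type*} [TopologicalSpace X] {u v : X → E2}
    (hu : Continuous u) (hv : Continuous v) : Continuous fun x => cross (u x) (v x) := by
  unfold _root_.cross
  fun_prop

theorem coordPairing_zero (u v c : E2) : coordPairing u v c 0 = 0 := by
  simp [coordPairing, cross]

theorem coordPairing_sub (u v c p q : E2) :
    coordPairing u v c (p - q) = coordPairing u v c p - coordPairing u v c q := by
  simp only [coordPairing, cross, PiLp.sub_apply]; ring

theorem hasDerivAt_coordPairing {A : E2 →L[ℝ] E2} {u v z : ℝ → E2} {h : E2} {t : ℝ} (c : E2)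
    (hu : HasDerivAt u (A (u t)) t) (hv : HasDerivAt v (A (v t)) t)
    (hz : HasDerivAt z (A (z t) + h) t) (hW : cross (u t) (v t) ≠ 0) :
    HasDerivAt (fun τ => coordPairing (u τ) (v τ) c (z τ)) (coordPairing (u t) (v t) c h) t := by
  have hnum := ((hz.cross hv).mul_const (c 0)).add ((hu.cross hz).mul_const (c 1))
  refine (hnum.div (hu.cross hv) hW).congr_deriv ?_
  have e₁ := cross_map_add_cross_map A (z t) (v t)
  have e₂ := cross_map_add_cross_map A (u t) (z t)
  have e₃ := cross_map_add_cross_map A (u t) (v t)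
  simp only [coordPairing, cross_add_left, cross_add_right, Pi.add_apply]
  field_simp
  linear_combination (c 0) * cross (u t) (v t) * e₁ + (c 1) * cross (u t) (v t) * e₂ -
    (cross (z t) (v t) * c 0 + cross (u t) (z t) * c 1) * e₃

theorem coordPairing_sub_eq_integral {A : ℝ → E2 →L[ℝ] E2} {u v z h : ℝ → E2} (c : E2)
    (hu : ∀ t, HasDerivAt u (A t (u t)) t) (hv : ∀ t, HasDerivAt v (A t (v t)) t)
    (hz : ∀ t, HasDerivAt z (A t (z t) + h t) t) (hh : Continuous h)
    (hW : ∀ t, cross (u t) (v t) ≠ 0) (a b : ℝ) :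
    coordPairing (u b) (v b) c (z b) - coordPairing (u a) (v a) c (z a) =
      ∫ t in a..b, coordPairing (u t) (v t) c (h t) := by
  have huc : Continuous u := continuous_iff_continuousAt.2 fun t => (hu t).continuousAt
  have hvc : Continuous v := continuous_iff_continuousAt.2 fun t => (hv t).continuousAt
  have hcont : Continuous fun t => coordPairing (u t) (v t) c (h t) :=
    (((hh.cross hvc).mul continuous_const).add ((huc.cross hh).mul continuous_const)).div
      (huc.cross hvc) hW
  exact (intervalIntegral.integral_eq_sub_of_hasDerivAt
    (fun t _ => hasDerivAt_coordPairing c (hu t) (hv t) (hz t) (hW t))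
    (hcont.intervalIntegrable a b)).symm

theorem coordPairing_eq_of_homogeneous {A : ℝ → E2 →L[ℝ] E2} {u v w : ℝ → E2} (c : E2)
    (hu : ∀ t, HasDerivAt u (A t (u t)) t) (hv : ∀ t, HasDerivAt v (A t (v t)) t)
    (hw : ∀ t, HasDerivAt w (A t (w t)) t) (hW : ∀ t, cross (u t) (v t) ≠ 0) (a b : ℝ) :
    coordPairing (u a) (v a) c (w a) = coordPairing (u b) (v b) c (w b) := by
  have := coordPairing_sub_eq_integral c hu hv (h := 0) (fun t => by simpa using hw t)
    continuous_const hW a b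
  simp only [Pi.zero_apply, coordPairing_zero, intervalIntegral.integral_zero] at this
  exact (sub_eq_zero.mp this).symm

/-- The frame `t ↦ Y (t - T)` is again fundamental, and in it the jump `t ↦ z t - z (t - T)`
solves the homogeneous system, so its coordinates are constant; at `t = s` the jump is
`-z (s - T)`, which variation of constants integrates from `z s = 0`. -/
theorem coordPairing_sub_eq_integral_of_periodic {A : ℝ → E2 →L[ℝ] E2} {X Y z h : ℝ → E2}
    {T s : ℝ} (c : E2) (hA : Function.Periodic A T) (hh : Function.Periodic h T)
    (hhc : Continuous h) (hX : ∀ t, HasDerivAt X (A t (X t)) t) (hXT : Function.Periodic X T)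
    (hY : ∀ t, HasDerivAt Y (A t (Y t)) t) (hW : ∀ t, cross (X t) (Y t) ≠ 0)
    (hz : ∀ t, HasDerivAt z (A t (z t) + h t) t) (hzs : z s = 0) :
    coordPairing (X 0) (Y 0) c (z T - z 0) = ∫ σ in (s - T)..s, coordPairing (X σ) (Y σ) c (h σ) := by
  have hY' : ∀ t, HasDerivAt (fun t => Y (t - T)) (A t (Y (t - T))) t := fun t => by
    simpa [hA.sub_eq] using (hY (t - T)).comp_sub_const t T
  have hw : ∀ t, HasDerivAt (fun t => z t - z (t - T)) (A t (z t - z (t - T))) t := fun t => by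
    refine ((hz t).sub ((hz (t - T)).comp_sub_const t T)).congr_deriv ?_
    simp [hA.sub_eq, hh.sub_eq, map_sub]
  have hW' : ∀ t, cross (X t) (Y (t - T)) ≠ 0 := fun t => by
    simpa [hXT.sub_eq] using hW (t - T)
  calc coordPairing (X 0) (Y 0) c (z T - z 0)
      = coordPairing (X T) (Y (T - T)) c (z T - z (T - T)) := by simp [hXT.eq]
    _ = coordPairing (X (s - T)) (Y (s - T)) c (z s - z (s - T)) := by
      rw [coordPairing_eq_of_homogeneous c hX hY' hw hW' T s, hXT.sub_eq]
    _ = coordPairing (X s) (Y s) c (z s) - coordPairing (X (s - T)) (Y (s - T)) c (z (s - T)) := by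
      rw [coordPairing_sub, hzs, coordPairing_zero, coordPairing_zero]
    _ = _ := coordPairing_sub_eq_integral c hX hY hz hhc hW _ _

theorem ODE_solution_unique_of_locallyLipschitz {E : Type*} [NormedAddCommGroup E]
    [NormedSpace ℝ E] {v : E → E} (hv : LocallyLipschitz v) {f g : ℝ → E}
    (hf : ∀ t, HasDerivAt f (v (f t)) t) (hg : ∀ t, HasDerivAt g (v (g t)) t) {t₀ : ℝ}
    (heq : f t₀ = g t₀) : f = g := by
  have hfc : Continuous f := continuous_iff_continuousAt.2 fun t => (hf t).continuousAt
  have hgc : Continuous g := continuous_iff_continuousAt.2 fun t => (hg t).continuousAt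
  have hopen : IsOpen {t | f t = g t} := by
    refine isOpen_iff_mem_nhds.2 fun t₁ (ht₁ : f t₁ = g t₁) => ?_
    obtain ⟨K, U, hU, hlip⟩ := hv (f t₁)
    exact ODE_solution_unique_of_eventually (v := fun _ => v) (s := fun _ => U)
      (.of_forall fun _ => hlip)
      (Filter.eventually_of_mem (hfc.continuousAt.preimage_mem_nhds hU) fun t ht => ⟨hf t, ht⟩)
      (Filter.eventually_of_mem (hgc.continuousAt.preimage_mem_nhds (ht₁ ▸ hU))
        fun t ht => ⟨hg t, ht⟩) ht₁
  have huniv := IsClopen.eq_univ ⟨isClosed_eq hfc hgc, hopen⟩ ⟨t₀, heq⟩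
  exact funext fun t => (huniv ▸ Set.mem_univ t : t ∈ {t | f t = g t})

theorem inner_columnsMatrix_mulVec {u v : E2} (hW : cross u v ≠ 0) (c p : E2) :
    ⟪p, (WithLp.toLp 2 ((columnsMatrix (topVec v) (perpVec u)).mulVec c) : E2)⟫ =
      cross u v * coordPairing u v c p := by
  rw [coordPairing, mul_div_cancel₀ _ hW]
  simp only [columnsMatrix, topVec, perpVec, cross, Matrix.cons_val_zero, Matrix.cons_val_one,
    Matrix.cons_val_fin_one, Matrix.cons_mulVec, Matrix.empty_mulVec, dotProduct, Fin.sum_univ_two,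
    PiLp.inner_apply, RCLike.inner_apply, Real.ringHom_apply]
  ring

theorem inner_det_inv_smul_mulVecE_rowsMatrix (u v c p : E2) :
    ⟪((rowsMatrix (topVec v) (perpVec u)).det)⁻¹ • mulVecE (rowsMatrix (topVec v) (perpVec u)) p,
      c⟫ = coordPairing u v c p := by
  simp only [mulVecE, rowsMatrix, topVec, perpVec, coordPairing, cross, Matrix.cons_val_zero,
    Matrix.cons_val_one, Matrix.cons_val_fin_one, Matrix.det_fin_two_of, Matrix.cons_mulVec,
    Matrix.empty_mulVec, dotProduct, Fin.sum_univ_two, PiLp.inner_apply, PiLp.smul_apply,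
    smul_eq_mul, RCLike.inner_apply, Real.ringHom_apply]
  ring

theorem inner_topVec (u v : E2) : ⟪u, topVec v⟫ = cross u v := by
  simp only [topVec, cross, PiLp.inner_apply, RCLike.inner_apply, Real.ringHom_apply,
    Fin.sum_univ_two, Matrix.cons_val_zero, Matrix.cons_val_one, Matrix.cons_val_fin_one]
  ring

theorem eta_difference_inner_N_factored_formula_general
    (ψ : EuclideanSpace ℝ (Fin 2) → EuclideanSpace ℝ (Fin 2))
    (hψ : ContDiff ℝ 2 ψ)
    (T₁ : ℝ) (hT₁ : 0 < T₁)
    (φ : ℝ → EuclideanSpace ℝ (Fin 2) → EuclideanSpace ℝ (Fin 2))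
    (hφcont : Continuous fun p : ℝ × EuclideanSpace ℝ (Fin 2) => φ p.1 p.2)
    (hφper : ∀ t ξ, φ (t + T₁) ξ = φ t ξ)
    (T₀ : ℝ)
    (x₀ : ℝ → EuclideanSpace ℝ (Fin 2))
    (hx₀sol : ∀ t : ℝ, HasDerivAt x₀ (ψ (x₀ t)) t)
    (hx₀per : Function.Periodic x₀ T₀)
    (l k : ℕ) (hk : Nat.Prime k)
    (hratio : T₀ / T₁ = (l : ℝ) / (k : ℝ))
    (T : ℝ) (hT : T = (k : ℝ) * l * T₀)
    (Ω : ℝ → ℝ → EuclideanSpace ℝ (Fin 2) → EuclideanSpace ℝ (Fin 2))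
    (hΩinit : ∀ t₀ ξ, Ω t₀ t₀ ξ = ξ)
    (hΩsol : ∀ t₀ ξ t, HasDerivAt (fun s => Ω s t₀ ξ) (ψ (Ω t t₀ ξ)) t)
    (η : ℝ → ℝ → EuclideanSpace ℝ (Fin 2) → EuclideanSpace ℝ (Fin 2))
    (hηinit : ∀ s ξ, η s s ξ = 0)
    (hηsol : ∀ s ξ t, HasDerivAt (fun u => η u s ξ)
      (fderiv ℝ ψ (Ω t 0 ξ) (η t s ξ) + φ t (Ω t 0 ξ)) t)
    (y : ℝ → EuclideanSpace ℝ (Fin 2))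
    (hysol : ∀ t : ℝ, HasDerivAt y (fderiv ℝ ψ (x₀ t) (y t)) t)
    (hyindep : ∀ t : ℝ, LinearIndependent ℝ ![ψ (x₀ t), y t])
    (f : ℝ → EuclideanSpace ℝ (Fin 2))
    (N : ℝ → EuclideanSpace ℝ (Fin 2))
    (hN : ∀ θ : ℝ, N θ =
      (WithLp.toLp 2 ((columnsMatrix (topVec (y θ)) (perpVec (ψ (x₀ θ)))).mulVec (f θ)) :
        EuclideanSpace ℝ (Fin 2)))
    (D : ℝ → Matrix (Fin 2) (Fin 2) ℝ)
    (hD : ∀ t : ℝ, D t = rowsMatrix (topVec (y t)) (perpVec (ψ (x₀ t))))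
    (d : ℝ → ℝ → ℝ)
    (hd : ∀ t θ : ℝ, d t θ = ((D (t + θ)).det)⁻¹) :
    ∀ θ ∈ Set.Icc 0 T₀, ∀ s ∈ Set.Icc 0 T,
      ⟪η T s (x₀ θ) - η 0 s (x₀ θ), N θ⟫ =
        ⟪ψ (x₀ θ), topVec (y θ)⟫ *
          ∫ τ in (s - T + θ)..(s + θ),
            ⟪d τ 0 • mulVecE (D τ) (φ (τ - θ) (x₀ τ)), f θ⟫ := by
  intro θ _ s _
  have hx₀T : Function.Periodic x₀ T := by
    simpa [hT] using hx₀per.nat_mul (k * l)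
  have hφT : ∀ ξ, Function.Periodic (φ · ξ) T := fun ξ => by
    have hk0 : (k : ℝ) ≠ 0 := Nat.cast_ne_zero.mpr hk.ne_zero
    have hTl : T = ((l * l : ℕ) : ℝ) * T₁ := by
      rw [div_eq_div_iff hT₁.ne' hk0] at hratio
      rw [hT]; push_cast; linear_combination (l : ℝ) * hratio
    rw [hTl]
    exact (show Function.Periodic (φ · ξ) T₁ from fun t => hφper t ξ).nat_mul _
  have hΩ : (fun t => Ω t 0 (x₀ θ)) = fun t => x₀ (t + θ) :=
    ODE_solution_unique_of_locallyLipschitz (hψ.of_le one_le_two).locallyLipschitz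
      (hΩsol 0 (x₀ θ)) (fun t => (hx₀sol (t + θ)).comp_add_const t θ) (t₀ := 0)
      (by simp [hΩinit])
  have hx₀c : Continuous x₀ := continuous_iff_continuousAt.2 fun t => (hx₀sol t).continuousAt
  have hjump := coordPairing_sub_eq_integral_of_periodic (f θ) (s := s)
    (A := fun t => fderiv ℝ ψ (x₀ (t + θ))) (h := fun t => φ t (x₀ (t + θ)))
    (X := fun t => ψ (x₀ (t + θ)))
    ((hx₀T.add_const θ).comp _) (fun t => by simp [add_right_comm t T θ, hx₀T _, hφT _ t])
    (hφcont.comp (continuous_id.prodMk (hx₀c.comp (continuous_add_const θ))))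
    (fun t => ((hψ.differentiable two_ne_zero _).hasFDerivAt.comp_hasDerivAt t
      ((hx₀sol (t + θ)).comp_add_const t θ) :))
    ((hx₀T.add_const θ).comp ψ)
    (fun t => (hysol (t + θ)).comp_add_const t θ)
    (fun t => cross_ne_zero_of_linearIndependent (hyindep (t + θ)))
    (fun t => by simpa [congrFun hΩ t] using hηsol s (x₀ θ) t) (hηinit s (x₀ θ))
  simp only [zero_add] at hjump
  rw [hN, inner_columnsMatrix_mulVec (cross_ne_zero_of_linearIndependent (hyindep θ)),
    inner_topVec, hjump, ← intervalIntegral.integral_comp_add_right _ θ]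
  simp only [hd, hD, add_zero, add_sub_cancel_right, inner_det_inv_smul_mulVecE_rowsMatrix]

/-- **Identity established in the proof of Theorem 3.**  With `x₀` a periodic
solution of `ẋ = ψ(x)` of least period `T₀`, `y` a solution of the linearized
system independent of `ẋ₀`, `T = k l T₀`, `N(θ) = (y(θ)^⊤ ẋ₀(θ)^⊥) f(θ)`,
`D(t)` the matrix with rows `y(t)^⊤` and `ẋ₀(t)^⊥`, and
`d(t,θ) = (det D(t+θ))⁻¹`:  for every `θ ∈ [0,T₀]` and `s ∈ [0,T]`,
`⟨η(T,s,x₀(θ)) − η(0,s,x₀(θ)), N(θ)⟩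
  = ⟨ẋ₀(θ), y(θ)^⊤⟩ ∫_{s−T+θ}^{s+θ} ⟨d(τ,0) D(τ) φ(τ−θ, x₀(τ)), f(θ)⟩ dτ`. -/
theorem eta_difference_inner_N_factored_formula
    (ψ : EuclideanSpace ℝ (Fin 2) → EuclideanSpace ℝ (Fin 2))
    (hψ : ContDiff ℝ 2 ψ)
    (T₁ : ℝ) (hT₁ : 0 < T₁)
    (φ : ℝ → EuclideanSpace ℝ (Fin 2) → EuclideanSpace ℝ (Fin 2))
    (hφcont : Continuous fun p : ℝ × EuclideanSpace ℝ (Fin 2) => φ p.1 p.2)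
    (hφper : ∀ t ξ, φ (t + T₁) ξ = φ t ξ)
    (T₀ : ℝ) (hT₀ : 0 < T₀)
    (x₀ : ℝ → EuclideanSpace ℝ (Fin 2))
    (hx₀sol : ∀ t : ℝ, HasDerivAt x₀ (ψ (x₀ t)) t)
    (hx₀per : Function.Periodic x₀ T₀)
    (hx₀least : ∀ p : ℝ, 0 < p → Function.Periodic x₀ p → T₀ ≤ p)
    (l k : ℕ) (hl : Nat.Prime l) (hk : Nat.Prime k)
    (hratio : T₀ / T₁ = (l : ℝ) / (k : ℝ))
    (T : ℝ) (hT : T = (k : ℝ) * l * T₀)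
    (Ω : ℝ → ℝ → EuclideanSpace ℝ (Fin 2) → EuclideanSpace ℝ (Fin 2))
    (hΩinit : ∀ t₀ ξ, Ω t₀ t₀ ξ = ξ)
    (hΩsol : ∀ t₀ ξ t, HasDerivAt (fun s => Ω s t₀ ξ) (ψ (Ω t t₀ ξ)) t)
    (η : ℝ → ℝ → EuclideanSpace ℝ (Fin 2) → EuclideanSpace ℝ (Fin 2))
    (hηinit : ∀ s ξ, η s s ξ = 0)
    (hηsol : ∀ s ξ t, HasDerivAt (fun u => η u s ξ)
      (fderiv ℝ ψ (Ω t 0 ξ) (η t s ξ) + φ t (Ω t 0 ξ)) t)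
    (y : ℝ → EuclideanSpace ℝ (Fin 2))
    (hysol : ∀ t : ℝ, HasDerivAt y (fderiv ℝ ψ (x₀ t) (y t)) t)
    (hyindep : ∀ t : ℝ, LinearIndependent ℝ ![ψ (x₀ t), y t])
    (f : ℝ → EuclideanSpace ℝ (Fin 2))
    (N : ℝ → EuclideanSpace ℝ (Fin 2))
    (hN : ∀ θ : ℝ, N θ =
      (WithLp.toLp 2 ((columnsMatrix (topVec (y θ)) (perpVec (ψ (x₀ θ)))).mulVec (f θ)) :
        EuclideanSpace ℝ (Fin 2)))
    (D : ℝ → Matrix (Fin 2) (Fin 2) ℝ)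
    (hD : ∀ t : ℝ, D t = rowsMatrix (topVec (y t)) (perpVec (ψ (x₀ t))))
    (d : ℝ → ℝ → ℝ)
    (hd : ∀ t θ : ℝ, d t θ = ((D (t + θ)).det)⁻¹) :
    ∀ θ ∈ Set.Icc 0 T₀, ∀ s ∈ Set.Icc 0 T,
      ⟪η T s (x₀ θ) - η 0 s (x₀ θ), N θ⟫ =
        ⟪ψ (x₀ θ), topVec (y θ)⟫ *
          ∫ τ in (s - T + θ)..(s + θ),
            ⟪d τ 0 • mulVecE (D τ) (φ (τ - θ) (x₀ τ)), f θ⟫ :=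
  eta_difference_inner_N_factored_formula_general ψ hψ T₁ hT₁ φ hφcont hφper T₀ x₀ hx₀sol hx₀per l k
    hk hratio T hT Ω hΩinit hΩsol η hηinit hηsol y hysol hyindep f N hN D hD d hd
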